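/- arXiv:1211.4191 — 2 statements merged into one kernel-verified Lean document; each statement's English description precedes it below -/
import Mathlib

section
/- Let n and m be positive even integers, let f : 𝔽₂ⁿ → 𝔽₂ and g : 𝔽₂^m → 𝔽₂ be bent functions, let μ ∈ {1,…,n}, ρ ∈ {1,…,m}, let f₀, f₁ be the restrictions of f at coordinate μ and g₀, g₁ the restrictions of g at coordinate ρ. Then each of the three functions on 𝔽₂^{n−1} × 𝔽₂^{m−1} defined by h₁(x,y) = f₁(x) ⊕ g₀(y) ⊕ (f₀(x)⊕f₁(x))·(g₀(y)⊕g₁(y)), h₂(x,y) = f₀(x) ⊕ g₁(y) ⊕ (f₀(x)⊕f₁(x))·(g₀(y)⊕g₁(y)), and h₃(x,y) = f₁(x) ⊕ g₁(y) ⊕ (f₀(x)⊕f₁(x))·(g₀(y)⊕g₁(y)) is a bent function in n+m−2 variables. -/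
open Finset

/-- The sign `(-1)^b` for `b ∈ 𝔽₂`. -/
def chi (b : ZMod 2) : ℤ := if b = 0 then 1 else -1

/-- The Walsh transform of a Boolean function in `n` variables. -/
def walsh {n : ℕ} (f : (Fin n → ZMod 2) → ZMod 2) (ω : Fin n → ZMod 2) : ℤ :=
  ∑ x : Fin n → ZMod 2, chi (f x + ∑ i, ω i * x i)

/-- The Walsh transform of a Boolean function given on a product `𝔽₂ⁿ × 𝔽₂^m`. -/
def walsh2 {n m : ℕ} (f : (Fin n → ZMod 2) → (Fin m → ZMod 2) → ZMod 2)
    (α : Fin n → ZMod 2) (β : Fin m → ZMod 2) : ℤ :=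
  ∑ x : Fin n → ZMod 2, ∑ y : Fin m → ZMod 2,
    chi (f x y + (∑ i, α i * x i) + (∑ j, β j * y j))

/-- A Boolean function in `n` variables is bent if its Walsh transform only
takes the values `±2^(n/2)`. -/
def IsBent (n : ℕ) (f : (Fin n → ZMod 2) → ZMod 2) : Prop :=
  ∀ a, walsh f a = 2 ^ (n / 2) ∨ walsh f a = -(2 ^ (n / 2))

/-- Bentness for a function given on a product, i.e. as a function in `n + m` variables. -/
def IsBent2 (n m : ℕ) (f : (Fin n → ZMod 2) → (Fin m → ZMod 2) → ZMod 2) : Prop :=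
  ∀ α β, walsh2 f α β = 2 ^ ((n + m) / 2) ∨ walsh2 f α β = -(2 ^ ((n + m) / 2))

/-- `fd` is the dual of a bent function `f`:  `W_f(ω) = 2^(n/2) (−1)^{fd(ω)}`. -/
def IsDual {n : ℕ} (f fd : (Fin n → ZMod 2) → ZMod 2) : Prop :=
  ∀ ω, walsh f ω = 2 ^ (n / 2) * chi (fd ω)

/-- The dual for a bent function given on a product (a function of `n + m` variables). -/
def IsDual2 {n m : ℕ} (f fd : (Fin n → ZMod 2) → (Fin m → ZMod 2) → ZMod 2) : Prop :=
  ∀ α β, walsh2 f α β = 2 ^ ((n + m) / 2) * chi (fd α β)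

/-- Insert the bit `b` at position `μ`, giving a vector of length `n` from one of length `n-1`. -/
def insertAt {n : ℕ} (μ : Fin n) (b : ZMod 2) (x : Fin (n - 1) → ZMod 2) : Fin n → ZMod 2 :=
  fun i =>
    if h : (i : ℕ) < (μ : ℕ) then x ⟨i, by have := μ.isLt; omega⟩
    else if h' : (μ : ℕ) < (i : ℕ) then x ⟨(i : ℕ) - 1, by have := i.isLt; omega⟩
    else b

/-- Hamming weight of a vector in `𝔽₂ⁿ`. -/
def wt {n : ℕ} (ω : Fin n → ZMod 2) : ℕ := (Finset.univ.filter fun i => ω i ≠ 0).card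

/-- `t`-resiliency (with `t : ℤ`, so that the convention that every function is
`(-1)`-resilient holds). -/
def Resilient {n : ℕ} (t : ℤ) (f : (Fin n → ZMod 2) → ZMod 2) : Prop :=
  ∀ ω, (wt ω : ℤ) ≤ t → walsh f ω = 0

/-- `t`-resiliency for a function given on a product `𝔽₂ⁿ × 𝔽₂^m`. -/
def Resilient2 {n m : ℕ} (t : ℤ) (f : (Fin n → ZMod 2) → (Fin m → ZMod 2) → ZMod 2) : Prop :=
  ∀ α β, (wt α + wt β : ℤ) ≤ t → walsh2 f α β = 0


section IndirectSumVariantsAux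

lemma insertAt_eq_insertNth {k : ℕ} (μ : Fin (k + 1)) (b : ZMod 2) (x : Fin k → ZMod 2) :
    insertAt μ b x = Fin.insertNth μ b x := by
  funext j
  refine Fin.succAboveCases μ ?_ ?_ j
  · simp [insertAt, Fin.insertNth_apply_same]
  · intro i
    rw [Fin.insertNth_apply_succAbove]
    unfold insertAt Fin.succAbove
    by_cases h : Fin.castSucc i < μ
    · have h' : ((Fin.castSucc i : Fin (k+1)) : ℕ) < (μ : ℕ) := h
      simp only [if_pos h]
      rw [dif_pos h']
      congr 1
    · have h' : ¬ ((Fin.succ i : Fin (k+1)) : ℕ) < (μ : ℕ) := by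
        simp [Fin.lt_def] at h ⊢; omega
      have h'' : (μ : ℕ) < ((Fin.succ i : Fin (k+1)) : ℕ) := by
        simp [Fin.lt_def] at h ⊢; omega
      simp only [if_neg h]
      rw [dif_neg h', dif_pos h'']
      congr 1

lemma chi_add : ∀ a b : ZMod 2, chi (a + b) = chi a * chi b := by decide

lemma dot_insertNth {k : ℕ} (μ : Fin (k + 1)) (b c : ZMod 2) (α x : Fin k → ZMod 2) :
    ∑ j : Fin (k+1), Fin.insertNth μ b α j * Fin.insertNth μ c x j
      = b * c + ∑ i : Fin k, α i * x i := by
  rw [Fin.sum_univ_succAbove _ μ]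
  simp [Fin.insertNth_apply_same, Fin.insertNth_apply_succAbove]

lemma walsh_insertAt {k : ℕ} (μ : Fin (k + 1)) (f : (Fin (k+1) → ZMod 2) → ZMod 2)
    (b : ZMod 2) (α : Fin k → ZMod 2) :
    walsh f (insertAt μ b α)
      = walsh (fun x => f (insertAt μ 0 x)) α + chi b * walsh (fun x => f (insertAt μ 1 x)) α := by
  simp only [walsh, insertAt_eq_insertNth]
  rw [← Equiv.sum_comp (Fin.insertNthEquiv (fun _ => ZMod 2) μ)]
  rw [Fintype.sum_prod_type]
  have huniv : (univ : Finset (ZMod 2)) = {0, 1} := by decide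
  rw [huniv, Finset.sum_insert (by decide), Finset.sum_singleton]
  simp only [Fin.insertNthEquiv, Equiv.coe_fn_mk, dot_insertNth]
  rw [Finset.mul_sum]
  congr 1
  · apply Finset.sum_congr rfl; intro x _; congr 1
    rw [show (b * 0 : ZMod 2) = 0 from by ring, zero_add]; rfl
  · apply Finset.sum_congr rfl; intro x _
    rw [← chi_add]; congr 1
    rw [show (b * 1 : ZMod 2) = b from by ring]
    show f (μ.insertNth 1 x) + (b + ∑ i : Fin k, α i * x i)
        = b + (f (μ.insertNth 1 x) + ∑ i : Fin k, α i * x i)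
    ring

lemma two_walsh2 {n m : ℕ} (h : (Fin n → ZMod 2) → (Fin m → ZMod 2) → ZMod 2)
    (F0 F1 : (Fin n → ZMod 2) → ZMod 2) (G0 G1 : (Fin m → ZMod 2) → ZMod 2)
    (α : Fin n → ZMod 2) (β : Fin m → ZMod 2) (e1 e2 e3 e4 : ℤ)
    (hid : ∀ x y, (2:ℤ) * chi (h x y + (∑ i, α i * x i) + (∑ j, β j * y j))
      = e1 * (chi (F0 x + ∑ i, α i * x i) * chi (G0 y + ∑ j, β j * y j))
      + e2 * (chi (F0 x + ∑ i, α i * x i) * chi (G1 y + ∑ j, β j * y j))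
      + e3 * (chi (F1 x + ∑ i, α i * x i) * chi (G0 y + ∑ j, β j * y j))
      + e4 * (chi (F1 x + ∑ i, α i * x i) * chi (G1 y + ∑ j, β j * y j))) :
    2 * walsh2 h α β
      = e1 * (walsh F0 α * walsh G0 β) + e2 * (walsh F0 α * walsh G1 β)
      + e3 * (walsh F1 α * walsh G0 β) + e4 * (walsh F1 α * walsh G1 β) := by
  have double_factor : ∀ {X Y : Type} [Fintype X] [Fintype Y] (e : ℤ) (p : X → ℤ) (q : Y → ℤ),
      ∑ x : X, ∑ y : Y, e * (p x * q y) = e * ((∑ x, p x) * (∑ y, q y)) := by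
    intro X Y _ _ e p q
    rw [Finset.sum_mul_sum]
    simp [Finset.mul_sum]
  calc 2 * walsh2 h α β
      = ∑ x : Fin n → ZMod 2, ∑ y : Fin m → ZMod 2,
          (2:ℤ) * chi (h x y + (∑ i, α i * x i) + (∑ j, β j * y j)) := by
        rw [walsh2]; simp only [Finset.mul_sum]
    _ = ∑ x : Fin n → ZMod 2, ∑ y : Fin m → ZMod 2,
          (e1 * (chi (F0 x + ∑ i, α i * x i) * chi (G0 y + ∑ j, β j * y j))
          + e2 * (chi (F0 x + ∑ i, α i * x i) * chi (G1 y + ∑ j, β j * y j))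
          + e3 * (chi (F1 x + ∑ i, α i * x i) * chi (G0 y + ∑ j, β j * y j))
          + e4 * (chi (F1 x + ∑ i, α i * x i) * chi (G1 y + ∑ j, β j * y j))) := by
        exact Finset.sum_congr rfl fun x _ => Finset.sum_congr rfl fun y _ => hid x y
    _ = _ := by
        simp only [Finset.sum_add_distrib]
        rw [double_factor, double_factor, double_factor, double_factor]
        rfl

lemma chi_h1 : ∀ a b c d u v : ZMod 2,
    (2:ℤ) * chi ((b + c + (a + b) * (c + d)) + u + v)
      = 1 * (chi (a + u) * chi (c + v)) + (-1) * (chi (a + u) * chi (d + v))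
      + 1 * (chi (b + u) * chi (c + v)) + 1 * (chi (b + u) * chi (d + v)) := by decide

lemma chi_h2 : ∀ a b c d u v : ZMod 2,
    (2:ℤ) * chi ((a + d + (a + b) * (c + d)) + u + v)
      = 1 * (chi (a + u) * chi (c + v)) + 1 * (chi (a + u) * chi (d + v))
      + (-1) * (chi (b + u) * chi (c + v)) + 1 * (chi (b + u) * chi (d + v)) := by decide

lemma chi_h3 : ∀ a b c d u v : ZMod 2,
    (2:ℤ) * chi ((b + d + (a + b) * (c + d)) + u + v)
      = (-1) * (chi (a + u) * chi (c + v)) + 1 * (chi (a + u) * chi (d + v))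
      + 1 * (chi (b + u) * chi (c + v)) + 1 * (chi (b + u) * chi (d + v)) := by decide

lemma key_int (A B C D P Q : ℤ) (h1 : A + B = P ∨ A + B = -P) (h2 : A - B = P ∨ A - B = -P)
    (h3 : C = Q ∨ C = -Q) (h4 : D = Q ∨ D = -Q) :
    A * C + B * D = P * Q ∨ A * C + B * D = -(P * Q) := by
  rcases h1 with h1 | h1 <;> rcases h2 with h2 | h2 <;>
    rcases h3 with h3 | h3 <;> rcases h4 with h4 | h4 <;>
    first
    | (left; first
        | linear_combination A*h3+B*h4+Q*h1
        | linear_combination A*h3+B*h4+Q*h2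
        | linear_combination A*h3+B*h4-Q*h1
        | linear_combination A*h3+B*h4-Q*h2)
    | (right; first
        | linear_combination A*h3+B*h4+Q*h1
        | linear_combination A*h3+B*h4+Q*h2
        | linear_combination A*h3+B*h4-Q*h1
        | linear_combination A*h3+B*h4-Q*h2)

lemma variant_final {W A B X Y P Q : ℤ} {e : ℕ} (h2w : 2 * W = A * X + B * Y)
    (hAB : A + B = P ∨ A + B = -P) (hAB' : A - B = P ∨ A - B = -P)
    (hX : X = Q ∨ X = -Q) (hY : Y = Q ∨ Y = -Q)
    (hPQ : P * Q = 2 * 2 ^ e) : W = 2 ^ e ∨ W = -(2 ^ e) := by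
  have hk := key_int A B X Y P Q hAB hAB' hX hY
  rw [hPQ] at hk
  rcases hk with hk | hk
  · left; linarith [h2w]
  · right; linarith [h2w]

end IndirectSumVariantsAux

/-- the three variants of the modified indirect sum are also bent. -/
theorem bent_of_restriction_indirect_sum_variants (n m : ℕ)
    (hn0 : 0 < n) (hm0 : 0 < m) (hn : Even n) (hm : Even m)
    (f : (Fin n → ZMod 2) → ZMod 2) (g : (Fin m → ZMod 2) → ZMod 2)
    (hf : IsBent n f) (hg : IsBent m g) (μ : Fin n) (ρ : Fin m)
    (f0 f1 : (Fin (n - 1) → ZMod 2) → ZMod 2)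
    (g0 g1 : (Fin (m - 1) → ZMod 2) → ZMod 2)
    (hf0 : ∀ x, f0 x = f (insertAt μ 0 x)) (hf1 : ∀ x, f1 x = f (insertAt μ 1 x))
    (hg0 : ∀ y, g0 y = g (insertAt ρ 0 y)) (hg1 : ∀ y, g1 y = g (insertAt ρ 1 y))
    (h1 h2 h3 : (Fin (n - 1) → ZMod 2) → (Fin (m - 1) → ZMod 2) → ZMod 2)
    (hh1 : ∀ x y, h1 x y = f1 x + g0 y + (f0 x + f1 x) * (g0 y + g1 y))
    (hh2 : ∀ x y, h2 x y = f0 x + g1 y + (f0 x + f1 x) * (g0 y + g1 y))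
    (hh3 : ∀ x y, h3 x y = f1 x + g1 y + (f0 x + f1 x) * (g0 y + g1 y)) :
    IsBent2 (n - 1) (m - 1) h1 ∧ IsBent2 (n - 1) (m - 1) h2 ∧ IsBent2 (n - 1) (m - 1) h3 := by
  obtain ⟨k, rfl⟩ : ∃ k, n = k + 1 := ⟨n - 1, by omega⟩
  obtain ⟨l, rfl⟩ : ∃ l, m = l + 1 := ⟨m - 1, by omega⟩
  have hWf : ∀ (b : ZMod 2) (α' : Fin (k + 1 - 1) → ZMod 2),
      walsh f (insertAt μ b α') = walsh f0 α' + chi b * walsh f1 α' := by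
    intro b α'
    rw [walsh_insertAt μ f b α',
      show (fun x => f (insertAt μ 0 x)) = f0 from funext fun x => (hf0 x).symm,
      show (fun x => f (insertAt μ 1 x)) = f1 from funext fun x => (hf1 x).symm]
  have hWg : ∀ (b : ZMod 2) (β' : Fin (l + 1 - 1) → ZMod 2),
      walsh g (insertAt ρ b β') = walsh g0 β' + chi b * walsh g1 β' := by
    intro b β'
    rw [walsh_insertAt ρ g b β',
      show (fun y => g (insertAt ρ 0 y)) = g0 from funext fun y => (hg0 y).symm,
      show (fun y => g (insertAt ρ 1 y)) = g1 from funext fun y => (hg1 y).symm]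
  have hchi0 : chi 0 = 1 := by decide
  have hchi1 : chi 1 = -1 := by decide
  have hPQ : (2:ℤ) ^ ((k + 1) / 2) * 2 ^ ((l + 1) / 2)
      = 2 * 2 ^ ((k + 1 - 1 + (l + 1 - 1)) / 2) := by
    obtain ⟨a, ha⟩ := hn
    obtain ⟨b, hb⟩ := hm
    rw [← pow_add,
      show (k + 1) / 2 + (l + 1) / 2 = (k + 1 - 1 + (l + 1 - 1)) / 2 + 1 by omega,
      pow_succ, mul_comm]
  have setup : ∀ (α : Fin (k + 1 - 1) → ZMod 2) (β : Fin (l + 1 - 1) → ZMod 2),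
      (walsh f0 α + walsh f1 α = 2 ^ ((k+1)/2) ∨ walsh f0 α + walsh f1 α = -(2 ^ ((k+1)/2))) ∧
      (walsh f0 α - walsh f1 α = 2 ^ ((k+1)/2) ∨ walsh f0 α - walsh f1 α = -(2 ^ ((k+1)/2))) ∧
      (walsh g0 β + walsh g1 β = 2 ^ ((l+1)/2) ∨ walsh g0 β + walsh g1 β = -(2 ^ ((l+1)/2))) ∧
      (walsh g0 β - walsh g1 β = 2 ^ ((l+1)/2) ∨ walsh g0 β - walsh g1 β = -(2 ^ ((l+1)/2))) := by
    intro α β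
    refine ⟨?_, ?_, ?_, ?_⟩
    · have := hf (insertAt μ 0 α); rw [hWf 0 α, hchi0, one_mul] at this; exact this
    · have := hf (insertAt μ 1 α); rw [hWf 1 α, hchi1] at this
      rcases this with h | h
      · left; linarith
      · right; linarith
    · have := hg (insertAt ρ 0 β); rw [hWg 0 β, hchi0, one_mul] at this; exact this
    · have := hg (insertAt ρ 1 β); rw [hWg 1 β, hchi1] at this
      rcases this with h | h
      · left; linarith
      · right; linarith
  refine ⟨?_, ?_, ?_⟩ <;> intro α β <;>
    obtain ⟨hAB, hAB', hCD, hCD'⟩ := setup α β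
  · -- h1 : 2W = A*(C-D) + B*(C+D)
    have h2w : 2 * walsh2 h1 α β
        = walsh f0 α * (walsh g0 β - walsh g1 β) + walsh f1 α * (walsh g0 β + walsh g1 β) := by
      rw [two_walsh2 h1 f0 f1 g0 g1 α β 1 (-1) 1 1
        (fun x y => by rw [hh1 x y]; exact chi_h1 (f0 x) (f1 x) (g0 y) (g1 y) _ _)]
      ring
    exact variant_final h2w hAB hAB' hCD' hCD hPQ
  · -- h2 : 2W = A*(C+D) + B*(D-C)
    have h2w : 2 * walsh2 h2 α β
        = walsh f0 α * (walsh g0 β + walsh g1 β) + walsh f1 α * (walsh g1 β - walsh g0 β) := by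
      rw [two_walsh2 h2 f0 f1 g0 g1 α β 1 1 (-1) 1
        (fun x y => by rw [hh2 x y]; exact chi_h2 (f0 x) (f1 x) (g0 y) (g1 y) _ _)]
      ring
    have hDC : walsh g1 β - walsh g0 β = 2 ^ ((l+1)/2)
        ∨ walsh g1 β - walsh g0 β = -(2 ^ ((l+1)/2)) := by
      rcases hCD' with h | h
      · right; linarith
      · left; linarith
    exact variant_final h2w hAB hAB' hCD hDC hPQ
  · -- h3 : 2W = A*(D-C) + B*(C+D)
    have h2w : 2 * walsh2 h3 α β
        = walsh f0 α * (walsh g1 β - walsh g0 β) + walsh f1 α * (walsh g0 β + walsh g1 β) := by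
      rw [two_walsh2 h3 f0 f1 g0 g1 α β (-1) 1 1 1
        (fun x y => by rw [hh3 x y]; exact chi_h3 (f0 x) (f1 x) (g0 y) (g1 y) _ _)]
      ring
    have hDC : walsh g1 β - walsh g0 β = 2 ^ ((l+1)/2)
        ∨ walsh g1 β - walsh g0 β = -(2 ^ ((l+1)/2)) := by
      rcases hCD' with h | h
      · right; linarith
      · left; linarith
    exact variant_final h2w hAB hAB' hDC hCD hPQ
end

section
/- Let n, m ≥ 1 and let t, k be integers with −1 ≤ t < n and −1 ≤ k < m. Let f₁, f₂, f₃ : 𝔽₂ⁿ → 𝔽₂ be t-resilient functions such that ν₁ = f₁ ⊕ f₂ ⊕ f₃ is also t-resilient, and let g₁, g₂, g₃ : 𝔽₂^m → 𝔽₂ be k-resilient functions such that ν₂ = g₁ ⊕ g₂ ⊕ g₃ is also k-resilient. Then the function f : 𝔽₂ⁿ × 𝔽₂^m → 𝔽₂ defined by f(x,y) = f₁(x) ⊕ g₁(y) ⊕ (f₁(x)⊕f₂(x))(g₁(y)⊕g₂(y)) ⊕ (f₂(x)⊕f₃(x))(g₂(y)⊕g₃(y)) is a (t+k+1)-resilient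 function in n+m variables. -/
open Finset

lemma chi_key : ∀ a b c u v w A B : ZMod 2,
    4 * chi (a + u + (a + b) * (u + v) + (b + c) * (v + w) + A + B) =
      chi (a + A) * chi (u + B) + chi (a + b + c + A) * chi (u + B)
    + chi (a + A) * chi (u + v + w + B) - chi (a + b + c + A) * chi (u + v + w + B)
    + chi (b + A) * chi (u + B) + chi (c + A) * chi (u + B)
    + chi (b + A) * chi (u + v + w + B) - chi (c + A) * chi (u + v + w + B)
    + chi (a + A) * chi (v + B) + chi (a + b + c + A) * chi (v + B)
    + chi (a + A) * chi (w + B) - chi (a + b + c + A) * chi (w + B)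
    - chi (b + A) * chi (v + B) - chi (c + A) * chi (v + B)
    - chi (b + A) * chi (w + B) + chi (c + A) * chi (w + B) := by decide

/-- generalized indirect sum of resilient functions — the combination of
three `t`-resilient and three `k`-resilient functions (whose triple sums are also
resilient) is `(t+k+1)`-resilient in `n + m` variables. -/
theorem resilient_generalized_indirect_sum (n m : ℕ) (hn : 1 ≤ n) (hm : 1 ≤ m)
    (t k : ℤ) (ht1 : -1 ≤ t) (htn : t < (n : ℤ)) (hk1 : -1 ≤ k) (hkm : k < (m : ℤ))
    (f1 f2 f3 : (Fin n → ZMod 2) → ZMod 2)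
    (g1 g2 g3 : (Fin m → ZMod 2) → ZMod 2)
    (hf1 : Resilient t f1) (hf2 : Resilient t f2) (hf3 : Resilient t f3)
    (hν1 : Resilient t fun x => f1 x + f2 x + f3 x)
    (hg1 : Resilient k g1) (hg2 : Resilient k g2) (hg3 : Resilient k g3)
    (hν2 : Resilient k fun y => g1 y + g2 y + g3 y)
    (f : (Fin n → ZMod 2) → (Fin m → ZMod 2) → ZMod 2)
    (hf : ∀ x y,
      f x y = f1 x + g1 y + (f1 x + f2 x) * (g1 y + g2 y) + (f2 x + f3 x) * (g2 y + g3 y)) :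
    Resilient2 (t + k + 1) f := by
  intro α β hw
  have key : ∀ x y, 4 * chi (f x y + (∑ i, α i * x i) + (∑ j, β j * y j)) =
      chi (f1 x + ∑ i, α i * x i) * chi (g1 y + ∑ j, β j * y j)
    + chi (f1 x + f2 x + f3 x + ∑ i, α i * x i) * chi (g1 y + ∑ j, β j * y j)
    + chi (f1 x + ∑ i, α i * x i) * chi (g1 y + g2 y + g3 y + ∑ j, β j * y j)
    - chi (f1 x + f2 x + f3 x + ∑ i, α i * x i) * chi (g1 y + g2 y + g3 y + ∑ j, β j * y j)
    + chi (f2 x + ∑ i, α i * x i) * chi (g1 y + ∑ j, β j * y j)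
    + chi (f3 x + ∑ i, α i * x i) * chi (g1 y + ∑ j, β j * y j)
    + chi (f2 x + ∑ i, α i * x i) * chi (g1 y + g2 y + g3 y + ∑ j, β j * y j)
    - chi (f3 x + ∑ i, α i * x i) * chi (g1 y + g2 y + g3 y + ∑ j, β j * y j)
    + chi (f1 x + ∑ i, α i * x i) * chi (g2 y + ∑ j, β j * y j)
    + chi (f1 x + f2 x + f3 x + ∑ i, α i * x i) * chi (g2 y + ∑ j, β j * y j)
    + chi (f1 x + ∑ i, α i * x i) * chi (g3 y + ∑ j, β j * y j)
    - chi (f1 x + f2 x + f3 x + ∑ i, α i * x i) * chi (g3 y + ∑ j, β j * y j)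
    - chi (f2 x + ∑ i, α i * x i) * chi (g2 y + ∑ j, β j * y j)
    - chi (f3 x + ∑ i, α i * x i) * chi (g2 y + ∑ j, β j * y j)
    - chi (f2 x + ∑ i, α i * x i) * chi (g3 y + ∑ j, β j * y j)
    + chi (f3 x + ∑ i, α i * x i) * chi (g3 y + ∑ j, β j * y j) := by
    intro x y
    rw [hf x y]
    exact chi_key (f1 x) (f2 x) (f3 x) (g1 y) (g2 y) (g3 y) _ _
  have hcases : (wt α : ℤ) ≤ t ∨ (wt β : ℤ) ≤ k := by omega
  have main : 4 * walsh2 f α β = 0 := by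
    unfold walsh2
    simp only [Finset.mul_sum]
    rcases hcases with h | h
    · have z1 := hf1 α h; have z2 := hf2 α h; have z3 := hf3 α h; have zν := hν1 α h
      unfold walsh at z1 z2 z3 zν
      rw [Finset.sum_comm]
      refine Finset.sum_eq_zero fun y _ => ?_
      rw [Finset.sum_congr rfl fun x _ => key x y]
      simp only [Finset.sum_add_distrib, Finset.sum_sub_distrib, ← Finset.sum_mul]
      rw [z1, z2, z3, zν]
      ring
    · have z1 := hg1 β h; have z2 := hg2 β h; have z3 := hg3 β h; have zν := hν2 β h
      unfold walsh at z1 z2 z3 zν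
      refine Finset.sum_eq_zero fun x _ => ?_
      rw [Finset.sum_congr rfl fun y _ => key x y]
      simp only [Finset.sum_add_distrib, Finset.sum_sub_distrib, ← Finset.mul_sum]
      rw [z1, z2, z3, zν]
      ring
  linarith
end
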